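/- arXiv:math/0310499 — 5 statements merged into one kernel-verified Lean document; each statement's English description precedes it below -/
import Mathlib

section
/- Let $(a_n)_{n\ge 0}$ be a sequence of positive reals with $a_n \le k_1 n^{k_2-1}$ for all $n \ge 1$, for some constants $k_1, k_2 > 0$. Then there exists a sequence $(w_n)$ of positive reals such that $\liminf_{n\to\infty} a_n/w_n = 1$ and $\limsup_{n\to\infty} \frac{n w_n}{\sum_{l=0}^{n-1} w_l} < \infty$. -/
open Filter Finset


noncomputable def Tseq (a : ℕ → ℝ) (K : ℝ) : ℕ → ℝ
  | 0 => a 0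
  | n+1 => Tseq a K n + min (a (n+1)) (K / (n+1) * Tseq a K n)

lemma Tseq_pos (a : ℕ → ℝ) (K : ℝ) (hK : 0 < K) (hpos : ∀ n, 0 < a n) :
    ∀ n, 0 < Tseq a K n := by
  intro n
  induction n with
  | zero => exact hpos 0
  | succ n ih =>
    have h1 : 0 < K / (n+1 : ℝ) * Tseq a K n := by positivity
    have := lt_min (hpos (n+1)) h1
    simp only [Tseq]
    positivity

lemma pow_succ_le (m : ℕ) : ∀ x : ℝ, 1 ≤ x → (x+1)^m ≤ x^m + 3^m * x^(m-1) := by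
  induction m with
  | zero => intro x hx; norm_num
  | succ m ih =>
    intro x hx
    have hx0 : 0 < x := lt_of_lt_of_le one_pos hx
    rcases Nat.eq_zero_or_pos m with rfl | hm
    · norm_num
    obtain ⟨m', rfl⟩ : ∃ m', m = m' + 1 := ⟨m - 1, by omega⟩
    have h2 : (x+1)^(m'+1) * (x+1) ≤ (x^(m'+1) + 3^(m'+1) * x^m') * (x+1) := by
      have := ih x hx
      simp only [Nat.add_sub_cancel] at this
      apply mul_le_mul_of_nonneg_right this; linarith
    have hxm1 : x^m' ≤ x^(m'+1) := pow_le_pow_right₀ hx (by omega)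
    have h3 : (0:ℝ) < (3:ℝ)^(m'+1) := by positivity
    have h4 : (0:ℝ) < x^(m'+1) := by positivity
    calc (x+1)^(m'+1+1) = (x+1)^(m'+1) * (x+1) := pow_succ _ _
      _ ≤ (x^(m'+1) + 3^(m'+1) * x^m') * (x+1) := h2
      _ = x^(m'+1) * x + x^(m'+1) + 3^(m'+1) * (x^m' * x) + 3^(m'+1) * x^m' := by ring
      _ = x^(m'+1+1) + x^(m'+1) + 3^(m'+1) * x^(m'+1) + 3^(m'+1) * x^m' := by
          rw [← pow_succ, ← pow_succ]
      _ ≤ x^(m'+1+1) + 3^(m'+1+1) * x^(m'+1+1-1) := by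
          simp only [Nat.add_sub_cancel, pow_succ (3:ℝ)]
          have h5 : (1:ℝ) ≤ 3^m' := one_le_pow₀ (by norm_num)
          nlinarith [mul_le_mul_of_nonneg_left hxm1 (by positivity : (0:ℝ) ≤ 3^m')]

/-- Lemma 2.1 (Lemma 6.1 of the paper): for a positive sequence `a` with polynomial
growth bound `a n ≤ k₁ n^(k₂-1)`, there is a positive sequence `w` with
`liminf aₙ/wₙ = 1` and `limsup n wₙ / ∑_{l<n} w_l < ∞`. -/
theorem exists_weight_sequence (a : ℕ → ℝ) (k₁ k₂ : ℝ) (hk₁ : 0 < k₁) (hk₂ : 0 < k₂)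
    (hpos : ∀ n, 0 < a n) (hbd : ∀ n : ℕ, 1 ≤ n → a n ≤ k₁ * (n : ℝ) ^ (k₂ - 1)) :
    ∃ w : ℕ → ℝ, (∀ n, 0 < w n) ∧
      Filter.liminf (fun n => a n / w n) Filter.atTop = 1 ∧
      Filter.IsBoundedUnder (· ≤ ·) Filter.atTop
        (fun n : ℕ => (n : ℝ) * w n / ∑ l ∈ Finset.range n, w l) := by
  set m : ℕ := ⌈k₂⌉₊ + 1 with hm
  have hm2 : 2 ≤ m := by
    have : 1 ≤ ⌈k₂⌉₊ := Nat.ceil_pos.mpr hk₂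
    omega
  set K : ℝ := 3 ^ m with hKdef
  have hK : 0 < K := by positivity
  set T : ℕ → ℝ := Tseq a K with hT
  have hTpos : ∀ n, 0 < T n := Tseq_pos a K hK hpos
  set w : ℕ → ℝ := fun n => match n with
    | 0 => a 0
    | Nat.succ j => min (a (j+1)) (K / ((j:ℝ)+1) * T j) with hw
  have hw0 : w 0 = a 0 := rfl
  have hwsucc : ∀ j : ℕ, w (j+1) = min (a (j+1)) (K / ((j:ℝ)+1) * T j) := fun j => rfl
  have hwpos : ∀ n, 0 < w n := by
    intro n
    match n with
    | 0 => exact hpos 0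
    | Nat.succ j =>
      rw [hwsucc]
      exact lt_min (hpos (j+1)) (mul_pos (div_pos hK (by positivity)) (hTpos j))
  have hwle : ∀ n, w n ≤ a n := by
    intro n
    match n with
    | 0 => exact le_refl _
    | Nat.succ j => rw [hwsucc]; exact min_le_left _ _
  have hTrec : ∀ j : ℕ, T (j+1) = T j + w (j+1) := by
    intro j
    rw [hwsucc, hT]
    rfl
  have hsum : ∀ n : ℕ, ∑ l ∈ Finset.range (n+1), w l = T n := by
    intro n
    induction n with
    | zero => simp [hw0, hT, Tseq]
    | succ n ih => rw [Finset.sum_range_succ, ih, hTrec]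
  -- lower bound for the ratio
  have hge : ∀ n, 1 ≤ a n / w n := fun n => (one_le_div (hwpos n)).2 (hwle n)
  -- frequently the ratio equals 1
  have hfreq : ∃ᶠ n in atTop, a n / w n ≤ 1 := by
    by_contra hcon
    rw [Filter.not_frequently] at hcon
    rw [Filter.eventually_atTop] at hcon
    obtain ⟨N, hN⟩ := hcon
    set M := N + 1 with hM
    have hM1 : 1 ≤ M := by omega
    have hlt : ∀ n, M ≤ n → w n < a n := by
      intro n hn
      have h1 : 1 < a n / w n := lt_of_not_ge (hN n (by omega))
      exact (one_lt_div (hwpos n)).1 h1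
    have hweq : ∀ j : ℕ, M ≤ j + 1 → w (j+1) = K / ((j:ℝ)+1) * T j ∧
        K / ((j:ℝ)+1) * T j < a (j+1) := by
      intro j hj
      have h1 := hlt (j+1) hj
      rw [hwsucc] at h1 ⊢
      rcases le_or_gt (a (j+1)) (K / ((j:ℝ)+1) * T j) with h | h
      · rw [min_eq_left h] at h1; exact absurd h1 (lt_irrefl _)
      · exact ⟨min_eq_right h.le, h⟩
    set c : ℝ := T (M-1) / (M:ℝ)^m with hc
    have hMpos : (0:ℝ) < (M:ℝ) := by exact_mod_cast hM1
    have hcpos : 0 < c := div_pos (hTpos _) (pow_pos hMpos m)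
    have hgrow : ∀ j : ℕ, c * ((M+j : ℕ):ℝ)^m ≤ T (M-1+j) := by
      intro j
      induction j with
      | zero =>
        simp only [Nat.add_zero]
        rw [hc]
        rw [div_mul_eq_mul_div, mul_div_assoc, div_self (pow_pos hMpos m).ne', mul_one]
      | succ j ih =>
        have hidx : M - 1 + (j+1) = (M - 1 + j) + 1 := by omega
        have hidx2 : (M - 1 + j) + 1 = M + j := by omega
        set x : ℝ := ((M+j : ℕ):ℝ) with hx
        have hx1 : (1:ℝ) ≤ x := by
          rw [hx]; exact_mod_cast Nat.one_le_iff_ne_zero.2 (by omega)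
        have hx0 : (0:ℝ) < x := lt_of_lt_of_le one_pos hx1
        have hcast : ((M - 1 + j : ℕ):ℝ) + 1 = x := by
          rw [hx]; push_cast; have : (1:ℝ) ≤ (M:ℝ) := by exact_mod_cast hM1
          push_cast [Nat.cast_sub hM1]; ring
        obtain ⟨hweq1, _⟩ := hweq (M - 1 + j) (by omega)
        have hTstep : T (M - 1 + (j+1)) = T (M-1+j) + K / x * T (M-1+j) := by
          rw [hidx, hTrec, hweq1, hcast]
        have hbin : (x+1)^m ≤ x^m + K * x^(m-1) := pow_succ_le m x hx1
        have hxm : x^m = x^(m-1) * x := by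
          conv_lhs => rw [show m = (m-1)+1 by omega]
          rw [pow_succ]
        have hkey : c * (x+1)^m ≤ T (M-1+j) + K / x * T (M-1+j) := by
          have h1 : c * (x+1)^m ≤ c * (x^m + K * x^(m-1)) :=
            mul_le_mul_of_nonneg_left hbin hcpos.le
          have h2 : K / x * (c * x^m) = c * (K * x^(m-1)) := by
            rw [hxm]; field_simp
          have h3 : K / x * (c * x^m) ≤ K / x * T (M-1+j) :=
            mul_le_mul_of_nonneg_left ih (div_pos hK hx0).le
          nlinarith [mul_le_mul_of_nonneg_left hbin hcpos.le]
        have hcast2 : ((M + (j+1) : ℕ):ℝ) = x + 1 := by rw [hx]; push_cast; ring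
        rw [hcast2, hTstep]
        exact hkey
    -- derive contradiction at a large n
    set n : ℕ := max M (⌈k₁ / (K*c)⌉₊ + 1) with hn
    have hnM : M ≤ n := le_max_left _ _
    have hn1 : 1 ≤ n := le_trans hM1 hnM
    obtain ⟨j, hj⟩ : ∃ j, n = j + 1 := ⟨n - 1, by omega⟩
    have hjM : M ≤ j + 1 := hj ▸ hnM
    obtain ⟨_, hTlt⟩ := hweq j hjM
    have hTj : T (n - 1) = T j := by rw [hj]; simp
    have hgrown : c * ((n:ℕ):ℝ)^m ≤ T j := by
      have := hgrow (n - M)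
      rw [show M - 1 + (n - M) = n - 1 by omega, show M + (n - M) = n by omega, hTj] at this
      exact this
    set x : ℝ := (n:ℝ) with hx
    have hx1 : (1:ℝ) ≤ x := by rw [hx]; exact_mod_cast hn1
    have hx0 : (0:ℝ) < x := lt_of_lt_of_le one_pos hx1
    have hxj : ((j:ℝ)+1) = x := by rw [hx, hj]; push_cast; ring
    have hxlarge : k₁ < K * c * x := by
      have h1 : k₁ / (K*c) < x := by
        have h2 : (⌈k₁ / (K*c)⌉₊ + 1 : ℕ) ≤ n := le_max_right _ _
        have h3 : k₁ / (K*c) ≤ (⌈k₁ / (K*c)⌉₊ : ℝ) := Nat.le_ceil _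
        have h4 : ((⌈k₁ / (K*c)⌉₊ : ℝ) + 1) ≤ x := by rw [hx]; exact_mod_cast h2
        linarith
      have hKc : 0 < K * c := by positivity
      calc k₁ = (k₁ / (K*c)) * (K*c) := by field_simp
        _ < x * (K*c) := by exact mul_lt_mul_of_pos_right h1 hKc
        _ = K * c * x := by ring
    -- a n > K c x^(m-1)
    have hchain1 : K * c * x^(m-1) < a n := by
      have h1 : K / x * (c * x^m) ≤ K / x * T j :=
        mul_le_mul_of_nonneg_left hgrown (by positivity)
      have h2 : K / x * (c * x^m) = K * c * x^(m-1) := by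
        rw [show x^m = x^(m-1) * x by
          conv_lhs => rw [show m = (m-1)+1 by omega]; rw [pow_succ]]
        field_simp
      have h3 : K / x * T j < a n := by
        rw [hj]; rw [← hxj]; exact hTlt
      calc K * c * x^(m-1) = K / x * (c * x^m) := h2.symm
        _ ≤ K / x * T j := h1
        _ < a n := h3
    -- a n ≤ k₁ x^(m-2)
    have hchain2 : a n ≤ k₁ * x^(m-2) := by
      have h1 : a n ≤ k₁ * x ^ (k₂ - 1) := hbd n hn1
      have h2 : x ^ (k₂ - 1) ≤ x ^ ((m-2 : ℕ):ℝ) := by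
        apply Real.rpow_le_rpow_of_exponent_le hx1
        have h3 : k₂ ≤ (⌈k₂⌉₊ : ℝ) := Nat.le_ceil _
        have h4 : ((m - 2 : ℕ):ℝ) = (⌈k₂⌉₊ : ℝ) - 1 := by
          have hmm : m - 2 = ⌈k₂⌉₊ - 1 := by omega
          rw [hmm, Nat.cast_sub (by have := Nat.ceil_pos.mpr hk₂; omega : 1 ≤ ⌈k₂⌉₊)]
          push_cast; ring
        rw [h4]; linarith
      have h5 : x ^ ((m-2 : ℕ):ℝ) = x ^ (m-2 : ℕ) := Real.rpow_natCast x (m-2)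
      calc a n ≤ k₁ * x ^ (k₂ - 1) := h1
        _ ≤ k₁ * x ^ ((m-2:ℕ):ℝ) := mul_le_mul_of_nonneg_left h2 hk₁.le
        _ = k₁ * x ^ (m-2 : ℕ) := by rw [h5]
    have hsplit : x^(m-1) = x^(m-2) * x := by
      conv_lhs => rw [show m - 1 = (m-2)+1 by omega]; rw [pow_succ]
    have hxm2 : (0:ℝ) < x^(m-2) := by positivity
    nlinarith [mul_lt_mul_of_pos_right hxlarge hxm2]
  -- assemble
  refine ⟨w, hwpos, ?_, ?_⟩
  · apply le_antisymm
    · exact liminf_le_of_frequently_le hfreq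
        ⟨1, eventually_map.2 (Filter.Eventually.of_forall hge)⟩
    · exact le_liminf_of_le (Filter.IsCoboundedUnder.of_frequently_le hfreq)
        (Filter.Eventually.of_forall hge)
  · refine ⟨K, eventually_map.2 (Filter.Eventually.of_forall ?_)⟩
    intro n
    match n with
    | 0 => simp [hK.le]
    | Nat.succ j =>
      rw [hsum j]
      have h1 : w (j+1) ≤ K / ((j:ℝ)+1) * T j := by rw [hwsucc]; exact min_le_right _ _
      have h2 : ((j+1:ℕ):ℝ) * w (j+1) ≤ K * T j := by
        push_cast
        calc ((j:ℝ)+1) * w (j+1) ≤ ((j:ℝ)+1) * (K / ((j:ℝ)+1) * T j) := by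
              apply mul_le_mul_of_nonneg_left h1 (by positivity)
          _ = K * T j := by field_simp
      show ((j+1:ℕ):ℝ) * w (j+1) / T j ≤ K
      rw [div_le_iff₀ (hTpos j)]
      exact h2
end

section
/- Let $(a_n)_{n\ge 0}$ and $(b_n)_{n \ge 0}$ be nonnegative real sequences with $\sum_{n} b_n = \infty$, and suppose $\sum_{n\ge 0} b_n a_n < \infty$. If moreover $\sum_{l=0}^{n} b_l a_l \le C a_n$ for some constant $C > 0$ and all $n$, then $b_n a_n = 0$ for all $n$. -/
open Filter Finset

/-- Key step in the `d = 1` ergodicity proof of Theorem 2.1: if `∑ bₙ = ∞`,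
`∑ bₙ aₙ < ∞` and `∑_{l ≤ n} b_l a_l ≤ C aₙ` for all `n`, then `bₙ aₙ = 0` for all `n`. -/
theorem terms_vanish (a b : ℕ → ℝ) (C : ℝ) (hC : 0 < C)
    (ha : ∀ n, 0 ≤ a n) (hb : ∀ n, 0 ≤ b n)
    (hbdiv : Filter.Tendsto (fun n => ∑ l ∈ Finset.range n, b l) Filter.atTop Filter.atTop)
    (hsum : Summable (fun n => b n * a n))
    (hrec : ∀ n, ∑ l ∈ Finset.range (n + 1), b l * a l ≤ C * a n) :
    ∀ n, b n * a n = 0 := by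
  intro k
  by_contra h
  have hpos : 0 < b k * a k := lt_of_le_of_ne (mul_nonneg (hb k) (ha k)) (Ne.symm h)
  set s := b k * a k with hs
  have key : ∀ n, k ≤ n → s / C ≤ a n := by
    intro n hn
    have h1 : s ≤ ∑ l ∈ Finset.range (n + 1), b l * a l := by
      apply Finset.single_le_sum (f := fun l => b l * a l)
      · intro i _; exact mul_nonneg (hb i) (ha i)
      · simpa using Nat.lt_succ_of_le hn
    have h2 : s ≤ C * a n := h1.trans (hrec n)
    exact (div_le_iff₀' hC).mpr h2
  have hsb : Summable b := by
    rw [← summable_nat_add_iff k]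
    have hsb' : Summable (fun n => (C / s) * (b (n + k) * a (n + k))) :=
      ((summable_nat_add_iff k).mpr hsum).mul_left _
    apply hsb'.of_nonneg_of_le (fun n => hb _)
    intro n
    have hkey := key (n + k) (Nat.le_add_left k n)
    have h1 : (s / C) * b (n + k) ≤ a (n + k) * b (n + k) :=
      mul_le_mul_of_nonneg_right hkey (hb _)
    calc b (n + k) = (C / s) * ((s / C) * b (n + k)) := by field_simp
      _ ≤ (C / s) * (b (n + k) * a (n + k)) := by
          apply mul_le_mul_of_nonneg_left _ (le_of_lt (div_pos hC hpos))
          linarith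
  exact not_tendsto_atTop_of_tendsto_nhds hsb.hasSum.tendsto_sum_nat hbdiv
end

section
/- Let $(\tau_k)_{k \ge 0}$ be the jump times of a continuous-time Markov chain whose holding-time parameters are uniformly bounded above and below (so $E[\tau_{k+1}-\tau_k \mid \mathcal{F}_k]$ and $\mathrm{Var}[\tau_{k+1}-\tau_k \mid \mathcal{F}_k]$ are bounded above and below uniformly in $k$), and let $c_k \ge 0$ be random variables measurable with respect to the discrete chain. Then almost surely $\sum_{k=0}^\infty c_k (\tau_{k+1}-\tau_k) = \infty$ if and only if $\sum_{k=0}^\infty c_k = \infty$. -/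
open MeasureTheory ProbabilityTheory Filter Topology Finset

/-!
If `∑ c k < ∞`, then `∑ c k D k` has finite expectation `≤ M ∑ c k`, hence is a.s. finite.
If `∑ c k = ∞`, replace `c k` by `b k = min (c k) 1`, which still has divergent sum `B n`.
The partial sums `S n = ∑_{k<n} b k D k` have mean `≥ m B n` and, by independence and `b k ≤ 1`,
variance `≤ M B n`; Chebyshev's inequality then gives `μ {S n ≤ A} = O(1 / B n) → 0`, so
the partial sums are a.s. unbounded.
-/

theorem Summable.of_min_one {c : ℕ → ℝ} (h : Summable fun k => min (c k) 1) : Summable c := by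
  refine h.congr_cofinite ?_
  filter_upwards [h.tendsto_cofinite_zero.eventually_lt_const one_pos] with k hk
  exact min_eq_left (lt_of_not_ge fun h1 => hk.not_ge (min_eq_right h1).ge).le

theorem tendsto_mul_div_sub_sq_atTop (K a : ℝ) :
    Tendsto (fun x : ℝ => K * x / (x - a) ^ 2) atTop (𝓝 0) := by
  have hinv : Tendsto (fun x : ℝ => (x - a)⁻¹) atTop (𝓝 0) :=
    tendsto_inv_atTop_zero.comp (tendsto_atTop_add_const_right _ _ tendsto_id)
  have hlim : Tendsto (fun x : ℝ => K * ((x - a)⁻¹ + a * (x - a)⁻¹ ^ 2)) atTop (𝓝 0) := by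
    simpa using (hinv.add ((hinv.pow 2).const_mul a)).const_mul K
  refine hlim.congr' ?_
  filter_upwards [eventually_gt_atTop a] with x hx
  have : x - a ≠ 0 := sub_ne_zero.2 hx.ne'
  field_simp
  ring

section

variable {Ω : Type*} [MeasurableSpace Ω] {μ : Measure Ω}

theorem ae_summable_of_summable_integral {Y : ℕ → Ω → ℝ} (hY : ∀ k, Integrable (Y k) μ)
    (hY0 : ∀ k ω, 0 ≤ Y k ω) (hs : Summable fun k => ∫ ω, Y k ω ∂μ) :
    ∀ᵐ ω ∂μ, Summable fun k => Y k ω := by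
  have hlint : ∀ k, ∫⁻ ω, ENNReal.ofReal (Y k ω) ∂μ = ENNReal.ofReal (∫ ω, Y k ω ∂μ) := fun k =>
    (ofReal_integral_eq_lintegral_ofReal (hY k) (.of_forall (hY0 k))).symm
  have hmeas : ∀ k, AEMeasurable (fun ω => ENNReal.ofReal (Y k ω)) μ := fun k =>
    (hY k).aemeasurable.ennreal_ofReal
  have hfin : ∫⁻ ω, ∑' k, ENNReal.ofReal (Y k ω) ∂μ ≠ ⊤ := by
    rw [lintegral_tsum hmeas, funext hlint,
      ← ENNReal.ofReal_tsum_of_nonneg (fun k => integral_nonneg (hY0 k)) hs]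
    exact ENNReal.ofReal_ne_top
  filter_upwards [ae_lt_top' (AEMeasurable.tsum hmeas) hfin] with ω hω
  exact (ENNReal.summable_toReal hω.ne).congr fun k => ENNReal.toReal_ofReal (hY0 k ω)

theorem ae_summable_mul_of_summable {X : ℕ → Ω → ℝ} (hX : ∀ k, Integrable (X k) μ)
    (hX0 : ∀ k ω, 0 ≤ X k ω) {M : ℝ} (hmean : ∀ k, μ[X k] ≤ M) {c : ℕ → ℝ} (hc : ∀ k, 0 ≤ c k)
    (hC : Summable c) :
    ∀ᵐ ω ∂μ, Summable fun k => c k * X k ω := by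
  refine ae_summable_of_summable_integral (fun k => (hX k).const_mul (c k))
    (fun k ω => mul_nonneg (hc k) (hX0 k ω)) ?_
  refine (hC.mul_right M).of_nonneg_of_le (fun k => ?_) (fun k => ?_) <;> rw [integral_const_mul]
  · exact mul_nonneg (hc k) (integral_nonneg (hX0 k))
  · exact mul_le_mul_of_nonneg_left (hmean k) (hc k)

theorem measure_le_le_ofReal_variance_div_sq [IsFiniteMeasure μ] {X : Ω → ℝ} (hX : MemLp X 2 μ)
    {a : ℝ} (ha : a < μ[X]) :
    μ {ω | X ω ≤ a} ≤ ENNReal.ofReal (variance X μ / (μ[X] - a) ^ 2) := by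
  refine le_trans (measure_mono fun ω (hω : X ω ≤ a) => ?_)
    (meas_ge_le_variance_div_sq hX (sub_pos.2 ha))
  show μ[X] - a ≤ |X ω - μ[X]|
  rw [abs_sub_comm]
  exact le_trans (by linarith) (le_abs_self _)

theorem measure_forall_le_eq_zero_of_variance_le [IsFiniteMeasure μ] {S : ℕ → Ω → ℝ}
    (hS : ∀ n, MemLp (S n) 2 μ) (hmean : Tendsto (fun n => μ[S n]) atTop atTop) {K : ℝ}
    (hvar : ∀ n, variance (S n) μ ≤ K * μ[S n]) (a : ℝ) :
    μ {ω | ∀ n, S n ω ≤ a} = 0 := by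
  have hbound : ∀ᶠ n in atTop, μ {ω | ∀ n, S n ω ≤ a}
      ≤ ENNReal.ofReal (K * μ[S n] / (μ[S n] - a) ^ 2) := by
    filter_upwards [hmean.eventually_gt_atTop a] with n hn
    calc μ {ω | ∀ n, S n ω ≤ a} ≤ μ {ω | S n ω ≤ a} := measure_mono fun ω hω => hω n
      _ ≤ ENNReal.ofReal (variance (S n) μ / (μ[S n] - a) ^ 2) :=
        measure_le_le_ofReal_variance_div_sq (hS n) hn
      _ ≤ _ := by gcongr; exact hvar n
  have hlim : Tendsto (fun n => ENNReal.ofReal (K * μ[S n] / (μ[S n] - a) ^ 2)) atTop (𝓝 0) := by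
    simpa using ENNReal.tendsto_ofReal ((tendsto_mul_div_sub_sq_atTop K a).comp hmean)
  exact nonpos_iff_eq_zero.1 (ge_of_tendsto hlim hbound)

theorem ae_not_bddAbove_of_variance_le [IsFiniteMeasure μ] {S : ℕ → Ω → ℝ}
    (hS : ∀ n, MemLp (S n) 2 μ) (hmean : Tendsto (fun n => μ[S n]) atTop atTop) {K : ℝ}
    (hvar : ∀ n, variance (S n) μ ≤ K * μ[S n]) :
    ∀ᵐ ω ∂μ, ¬ BddAbove (Set.range fun n => S n ω) := by
  have hnull : ∀ᵐ ω ∂μ, ∀ A : ℕ, ¬ ∀ n, S n ω ≤ A := ae_all_iff.2 fun A =>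
    measure_eq_zero_iff_ae_notMem.1 (measure_forall_le_eq_zero_of_variance_le hS hmean hvar A)
  filter_upwards [hnull] with ω hω ⟨a, ha⟩
  obtain ⟨A, hA⟩ := exists_nat_ge a
  exact hω A fun n => (ha ⟨n, rfl⟩).trans hA

section WeightedSum

variable {X : ℕ → Ω → ℝ} {b : ℕ → ℝ}

theorem mul_sum_le_integral_sum_const_mul (hX : ∀ k, Integrable (X k) μ) {m : ℝ}
    (hmean : ∀ k, m ≤ μ[X k]) (hb0 : ∀ k, 0 ≤ b k) (s : Finset ℕ) :
    m * ∑ k ∈ s, b k ≤ μ[∑ k ∈ s, fun ω => b k * X k ω] := by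
  simp only [Finset.sum_apply]
  rw [integral_finsetSum _ fun k _ => (hX k).const_mul (b k), mul_sum]
  refine sum_le_sum fun k _ => ?_
  rw [integral_const_mul, mul_comm]
  exact mul_le_mul_of_nonneg_left (hmean k) (hb0 k)

theorem variance_sum_const_mul_le [IsFiniteMeasure μ] (hX : ∀ k, MemLp (X k) 2 μ)
    (hindep : iIndepFun X μ) {M : ℝ} (hvar : ∀ k, variance (X k) μ ≤ M)
    (hb0 : ∀ k, 0 ≤ b k) (hb1 : ∀ k, b k ≤ 1) (s : Finset ℕ) :
    variance (∑ k ∈ s, fun ω => b k * X k ω) μ ≤ M * ∑ k ∈ s, b k := by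
  have hpair : Set.Pairwise (s : Set ℕ) fun i j =>
      IndepFun (fun ω => b i * X i ω) (fun ω => b j * X j ω) μ := fun i _ j _ hij =>
    (hindep.indepFun hij).comp (measurable_const_mul (b i)) (measurable_const_mul (b j))
  rw [IndepFun.variance_sum (fun k _ => (hX k).const_mul (b k)) hpair, mul_sum]
  refine sum_le_sum fun k _ => ?_
  rw [show (fun ω => b k * X k ω) = b k • X k from rfl, variance_smul]
  calc b k ^ 2 * variance (X k) μ ≤ b k * variance (X k) μ := by
        gcongr
        · exact variance_nonneg _ _
        · nlinarith [hb0 k, hb1 k]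
    _ ≤ M * b k := by rw [mul_comm]; exact mul_le_mul_of_nonneg_right (hvar k) (hb0 k)

end WeightedSum

theorem ae_not_summable_mul_of_not_summable [IsFiniteMeasure μ] {X : ℕ → Ω → ℝ}
    (hX : ∀ k, MemLp (X k) 2 μ) (hindep : iIndepFun X μ) (hX0 : ∀ k ω, 0 ≤ X k ω)
    {m M : ℝ} (hm : 0 < m) (hmean : ∀ k, m ≤ μ[X k]) (hvar : ∀ k, variance (X k) μ ≤ M)
    {c : ℕ → ℝ} (hc : ∀ k, 0 ≤ c k) (hC : ¬ Summable c) :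
    ∀ᵐ ω ∂μ, ¬ Summable fun k => c k * X k ω := by
  set b : ℕ → ℝ := fun k => min (c k) 1
  have hb0 : ∀ k, 0 ≤ b k := fun k => le_min (hc k) zero_le_one
  have hB : Tendsto (fun n => ∑ k ∈ range n, b k) atTop atTop :=
    (not_summable_iff_tendsto_nat_atTop_of_nonneg hb0).1 fun h => hC h.of_min_one
  set S : ℕ → Ω → ℝ := fun n => ∑ k ∈ range n, fun ω => b k * X k ω
  have hmeanS : ∀ n, m * ∑ k ∈ range n, b k ≤ μ[S n] := fun n =>
    mul_sum_le_integral_sum_const_mul (fun k => (hX k).integrable one_le_two) hmean hb0 _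
  have hvarS : ∀ n, variance (S n) μ ≤ M / m * μ[S n] := fun n => calc
    variance (S n) μ ≤ M * ∑ k ∈ range n, b k :=
      variance_sum_const_mul_le hX hindep hvar hb0 (fun k => min_le_right _ _) _
    _ = M / m * (m * ∑ k ∈ range n, b k) := by field_simp
    _ ≤ M / m * μ[S n] :=
      mul_le_mul_of_nonneg_left (hmeanS n) (div_nonneg ((variance_nonneg _ _).trans (hvar 0)) hm.le)
  have hS : ∀ n, MemLp (S n) 2 μ := fun n => memLp_finsetSum' _ fun k _ => (hX k).const_mul _
  filter_upwards [ae_not_bddAbove_of_variance_le hS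
    (tendsto_atTop_mono hmeanS (hB.const_mul_atTop hm)) hvarS] with ω hω hsum
  have hbX : Summable fun k => b k * X k ω := hsum.of_nonneg_of_le
    (fun k => mul_nonneg (hb0 k) (hX0 k ω)) (fun k => by gcongr; exacts [hX0 k ω, min_le_left _ _])
  refine hω ⟨∑' k, b k * X k ω, ?_⟩
  rintro _ ⟨n, rfl⟩
  simpa only [S, Finset.sum_apply] using
    hbX.sum_le_tsum _ fun k _ => mul_nonneg (hb0 k) (hX0 k ω)

end

theorem sum_weighted_holding_times_general
    {Ω : Type*} [MeasurableSpace Ω] (μ : Measure Ω) [IsProbabilityMeasure μ]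
    (D : ℕ → Ω → ℝ)
    (hindep : iIndepFun D μ)
    (hnonneg : ∀ k ω, 0 ≤ D k ω)
    (hint : ∀ k, Integrable (D k) μ) (hsq : ∀ k, Integrable (fun ω => (D k ω) ^ 2) μ)
    (m M : ℝ) (hm : 0 < m)
    (hmean : ∀ k, m ≤ ∫ ω, D k ω ∂μ ∧ ∫ ω, D k ω ∂μ ≤ M)
    (hvar : ∀ k, m ≤ ∫ ω, (D k ω - ∫ ω', D k ω' ∂μ) ^ 2 ∂μ ∧
      ∫ ω, (D k ω - ∫ ω', D k ω' ∂μ) ^ 2 ∂μ ≤ M)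
    (c : ℕ → ℝ) (hc : ∀ k, 0 ≤ c k) :
    ∀ᵐ ω ∂μ, ((Summable fun k => c k * D k ω) ↔ Summable c) := by
  by_cases hC : Summable c
  · filter_upwards [ae_summable_mul_of_summable hint hnonneg (fun k => (hmean k).2) hc hC]
      with ω hω
    exact iff_of_true hω hC
  · have hL2 : ∀ k, MemLp (D k) 2 μ := fun k =>
      (memLp_two_iff_integrable_sq (hint k).aestronglyMeasurable).2 (hsq k)
    have hvarD : ∀ k, variance (D k) μ ≤ M := fun k => by
      rw [variance_eq_integral (hint k).aemeasurable]
      exact (hvar k).2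
    filter_upwards [ae_not_summable_mul_of_not_summable hL2 hindep hnonneg hm
      (fun k => (hmean k).1) hvarD hc hC] with ω hω
    exact iff_of_false hω hC

/-- Three-series argument: if the holding times `D k = τ_{k+1} - τ_k` are independent
nonnegative random variables whose means and variances are bounded above and below
uniformly in `k`, and `c k ≥ 0` are constants, then almost surely
`∑ c k · D k = ∞` iff `∑ c k = ∞`. -/
theorem sum_weighted_holding_times
    {Ω : Type*} [MeasurableSpace Ω] (μ : Measure Ω) [IsProbabilityMeasure μ]
    (D : ℕ → Ω → ℝ) (hmeas : ∀ k, Measurable (D k))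
    (hindep : iIndepFun D μ)
    (hnonneg : ∀ k ω, 0 ≤ D k ω)
    (hint : ∀ k, Integrable (D k) μ) (hsq : ∀ k, Integrable (fun ω => (D k ω) ^ 2) μ)
    (m M : ℝ) (hm : 0 < m)
    (hmean : ∀ k, m ≤ ∫ ω, D k ω ∂μ ∧ ∫ ω, D k ω ∂μ ≤ M)
    (hvar : ∀ k, m ≤ ∫ ω, (D k ω - ∫ ω', D k ω' ∂μ) ^ 2 ∂μ ∧
      ∫ ω, (D k ω - ∫ ω', D k ω' ∂μ) ^ 2 ∂μ ≤ M)
    (c : ℕ → ℝ) (hc : ∀ k, 0 ≤ c k) :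
    ∀ᵐ ω ∂μ, ((Summable fun k => c k * D k ω) ↔ Summable c) :=
  sum_weighted_holding_times_general μ D hindep hnonneg hint hsq m M hm hmean hvar c hc
end

section
/- Let $\mathcal{E}_t$ be a nonexplosive continuous-time jump process on a countable set $\mathcal{N}$ with rates $Q_{xy}$, embedded discrete chain $\mathcal{E}_k$, and suppose there are constants $0 < \alpha_1 < \alpha_2 < \infty$ with $\alpha_1 \le \sum_{y \ne x} Q_{xy} \le \alpha_2$ for every $x$. Then for any $\mathcal{L} \subset \mathcal{N}$, almost surely the events $\{\int_0^\infty Q_{\mathcal{L}}(\mathcal{E}_t)\,dt = \infty\}$ and $\{\mathcal{E}_k \in \mathcal{L} \text{ infinitely often}\}$ coincide, where $Q_{\mathcal{L}}(x) = \sum_{y \in \mathcal{L}, y \ne x} Q_{xy}$. -/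
open MeasureTheory Filter
open scoped Classical

open scoped ENNReal

/-!
Write `c k = Q_L(E k)` and `Δ k = τ (k + 1) - τ k`. As `E` is constant on `[τ k, τ (k + 1))`, the
integral is `∑ c k Δ k`, and both events turn out to coincide almost surely with `∑ c k = ∞`.

Given `ℱ k`, the holding time `Δ k` is exponential with rate in `[α₁, α₂]`. Hence
`P(Δ k > 1 | ℱ k) ≥ e^{-α₂}`, and Lévy's extension of Borel–Cantelli, applied to the process
`∑ c k 1{Δ k > 1}` with increments bounded by `α₂`, turns `∑ c k = ∞` into `∑ c k Δ k = ∞`.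
Conversely `P(Δ k > j | ℱ k) ≤ e^{-α₁ j}` bounds `E[Δ k | ℱ k]` by `(1 - e^{-α₁})⁻¹`; on
`{∑ c k ≤ M}` the sequence `c` agrees with its truncation at level `M`, whose weighted sum has
finite expectation.

Given `ℱ k`, the chain jumps into `L` with probability `c k / Q(E k) ∈ [c k / α₂, c k / α₁]`, so
by Lévy's Borel–Cantelli lemma `E k ∈ L` infinitely often iff `∑ c k = ∞`.
-/

theorem ENNReal.tsum_ofReal_eq_top_iff_tendsto {a : ℕ → ℝ} (ha : ∀ k, 0 ≤ a k) :
    ∑' k, ENNReal.ofReal (a k) = ∞ ↔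
      Tendsto (fun n => ∑ k ∈ Finset.range n, a k) atTop atTop := by
  rw [← not_summable_iff_tendsto_nat_atTop_of_nonneg ha, not_iff_not.symm, not_not]
  refine ⟨fun h => ?_, Summable.tsum_ofReal_ne_top⟩
  simpa [ENNReal.toReal_ofReal (ha _)] using ENNReal.summable_toReal h

theorem ENNReal.ofReal_le_tsum_ite_natCast_lt (d : ℝ) :
    ENNReal.ofReal d ≤ ∑' j : ℕ, if (j : ℝ) < d then 1 else 0 :=
  calc ENNReal.ofReal d ≤ ⌈d⌉₊ := by
        simpa using ENNReal.ofReal_le_ofReal (Nat.le_ceil d)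
    _ = ∑ j ∈ Finset.range ⌈d⌉₊, if (j : ℝ) < d then 1 else 0 := by
        rw [Finset.sum_congr rfl fun j hj => if_pos (Nat.lt_ceil.1 (Finset.mem_range.1 hj))]
        simp
    _ ≤ _ := ENNReal.sum_le_tsum _

theorem ENNReal.tsum_eq_top_of_le_mul {ι : Type*} {a b : ι → ℝ≥0∞} {C : ℝ≥0∞} (hC : C ≠ ∞)
    (hab : ∀ k, a k ≤ C * b k) (ha : ∑' k, a k = ∞) : ∑' k, b k = ∞ := by
  by_contra hb
  have hle : ∑' k, a k ≤ C * ∑' k, b k := ENNReal.tsum_mul_left ▸ ENNReal.tsum_le_tsum hab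
  exact ENNReal.mul_ne_top hC hb (top_le_iff.1 (ha ▸ hle))

theorem tsum_ofReal_div_eq_top_iff {ι : Type*} {c q : ι → ℝ} {a b : ℝ} (ha : 0 < a) (hc : ∀ k, 0 ≤ c k)
    (hq : ∀ k, a ≤ q k ∧ q k ≤ b) :
    ∑' k, ENNReal.ofReal (c k / q k) = ∞ ↔ ∑' k, ENNReal.ofReal (c k) = ∞ := by
  have hq0 : ∀ k, 0 < q k := fun k => ha.trans_le (hq k).1
  constructor
  · refine ENNReal.tsum_eq_top_of_le_mul (C := ENNReal.ofReal a⁻¹) ENNReal.ofReal_ne_top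
      fun k => ?_
    rw [← ENNReal.ofReal_mul (inv_nonneg.2 ha.le), inv_mul_eq_div]
    exact ENNReal.ofReal_le_ofReal (div_le_div_of_nonneg_left (hc k) ha (hq k).1)
  · refine ENNReal.tsum_eq_top_of_le_mul (C := ENNReal.ofReal b) ENNReal.ofReal_ne_top
      fun k => ?_
    rw [← ENNReal.ofReal_mul (ha.trans_le ((hq k).1.trans (hq k).2)).le]
    refine ENNReal.ofReal_le_ofReal ?_
    rw [mul_div_assoc']
    exact (le_div_iff₀ (hq0 k)).2 (mul_comm b (c k) ▸ mul_le_mul_of_nonneg_left (hq k).2 (hc k))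

theorem iUnion_Ico_eq_Ici_of_tendsto_atTop {τ : ℕ → ℝ} (hmono : Monotone τ)
    (htop : Tendsto τ atTop atTop) : ⋃ k, Set.Ico (τ k) (τ (k + 1)) = Set.Ici (τ 0) := by
  refine Set.Subset.antisymm (Set.iUnion_subset fun k t ht => (hmono k.zero_le).trans ht.1)
    fun t ht => ?_
  have hex : ∃ n, t < τ n := (htop.eventually_gt_atTop t).exists
  obtain ⟨k, hk⟩ : ∃ k, Nat.find hex = k + 1 :=
    Nat.exists_eq_succ_of_ne_zero fun h0 => (Nat.find_spec hex).not_ge (h0 ▸ ht)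
  exact Set.mem_iUnion.2 ⟨k, not_lt.1 (Nat.find_min hex (hk ▸ k.lt_succ_self)),
    hk ▸ Nat.find_spec hex⟩

theorem lintegral_Ici_eq_tsum_of_eq_on_Ico {τ : ℕ → ℝ} (hmono : Monotone τ)
    (htop : Tendsto τ atTop atTop) {f : ℝ → ℝ≥0∞} {a : ℕ → ℝ≥0∞}
    (hf : ∀ k t, τ k ≤ t → t < τ (k + 1) → f t = a k) :
    ∫⁻ t in Set.Ici (τ 0), f t = ∑' k, a k * ENNReal.ofReal (τ (k + 1) - τ k) := by
  rw [← iUnion_Ico_eq_Ici_of_tendsto_atTop hmono htop,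
    lintegral_iUnion (fun _ => measurableSet_Ico)
      (by simpa only [Order.succ_eq_add_one] using hmono.pairwise_disjoint_on_Ico_succ)]
  refine tsum_congr fun k => ?_
  rw [setLIntegral_congr_fun measurableSet_Ico fun t ht => hf k t ht.1 ht.2,
    setLIntegral_const, Real.volume_Ico]

theorem sum_range_ite_sum_le_add {c : ℕ → ℝ} {B M : ℝ} (hM : 0 ≤ M) (hc0 : ∀ k, 0 ≤ c k)
    (hcB : ∀ k, c k ≤ B) (n : ℕ) :
    ∑ k ∈ Finset.range n, (if ∑ j ∈ Finset.range k, c j ≤ M then c k else 0) ≤ M + B := by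
  induction n with
  | zero => simpa using hM.trans (le_add_of_nonneg_right ((hc0 0).trans (hcB 0)))
  | succ n ih =>
    rw [Finset.sum_range_succ]
    split_ifs with h
    · have hle : ∑ k ∈ Finset.range n, (if ∑ j ∈ Finset.range k, c j ≤ M then c k else 0) ≤
          ∑ k ∈ Finset.range n, c k :=
        Finset.sum_le_sum fun k _ => by split_ifs <;> simp [hc0 k]
      linarith [hcB n]
    · simpa using ih

section

variable {Ω : Type*} {m m0 : MeasurableSpace Ω} {μ : Measure Ω} [IsFiniteMeasure μ]

theorem setLIntegral_ofReal_le_of_condExp_indicator_le (hm : m ≤ m0)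
    {G : Ω → ℝ} (hGm : StronglyMeasurable[m] G) (hGint : Integrable G μ) (hG0 : ∀ ω, 0 ≤ G ω)
    {s : Set Ω} (hs : MeasurableSet s) {p : ℝ}
    (hp : ∀ᵐ ω ∂μ, μ[s.indicator (fun _ => (1 : ℝ))|m] ω ≤ p) :
    ∫⁻ ω in s, ENNReal.ofReal (G ω) ∂μ ≤ ENNReal.ofReal p * ∫⁻ ω, ENNReal.ofReal (G ω) ∂μ := by
  have hGs : G * s.indicator (fun _ => 1) = s.indicator G := by
    ext ω; by_cases h : ω ∈ s <;> simp [h]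
  have hpull : ∫ ω, s.indicator G ω ∂μ = ∫ ω, G ω * μ[s.indicator (fun _ => 1)|m] ω ∂μ := by
    rw [← integral_condExp hm, ← hGs]
    exact integral_congr_ae (condExp_mul_of_stronglyMeasurable_left hGm
      (hGs ▸ hGint.indicator hs) ((integrable_const 1).indicator hs))
  have hle : ∫ ω, s.indicator G ω ∂μ ≤ p * ∫ ω, G ω ∂μ := by
    rw [hpull, ← integral_const_mul]
    refine integral_mono_of_nonneg ?_ (hGint.const_mul p) ?_
    · filter_upwards [condExp_nonneg (f := s.indicator (fun _ => (1 : ℝ))) (m := m) (μ := μ)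
        (ae_of_all _ fun ω => Set.indicator_nonneg (fun _ _ => zero_le_one) ω)] with ω hω
      exact mul_nonneg (hG0 ω) hω
    · filter_upwards [hp] with ω hω
      rw [mul_comm p]
      exact mul_le_mul_of_nonneg_left hω (hG0 ω)
  rw [← lintegral_indicator hs, ← ofReal_integral_eq_lintegral_ofReal hGint (ae_of_all _ hG0)]
  calc ∫⁻ ω, s.indicator (fun ω => ENNReal.ofReal (G ω)) ω ∂μ
      = ENNReal.ofReal (∫ ω, s.indicator G ω ∂μ) := by
        rw [ofReal_integral_eq_lintegral_ofReal (hGint.indicator hs)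
          (ae_of_all _ (Set.indicator_nonneg fun ω _ => hG0 ω))]
        exact lintegral_congr fun ω => by by_cases h : ω ∈ s <;> simp [h]
    _ ≤ ENNReal.ofReal (p * ∫ ω, G ω ∂μ) := ENNReal.ofReal_le_ofReal hle
    _ = _ := ENNReal.ofReal_mul' (integral_nonneg hG0)

theorem lintegral_ofReal_mul_le_of_tail_le (hm : m ≤ m0)
    {G : Ω → ℝ} (hGm : StronglyMeasurable[m] G) (hGint : Integrable G μ) (hG0 : ∀ ω, 0 ≤ G ω)
    {Δ : Ω → ℝ} (hΔ : Measurable Δ) {r : ℝ} (hr : 0 ≤ r)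
    (htail : ∀ j : ℕ, ∀ᵐ ω ∂μ, μ[{ω | (j : ℝ) < Δ ω}.indicator (fun _ => (1 : ℝ))|m] ω ≤ r ^ j) :
    ∫⁻ ω, ENNReal.ofReal (G ω) * ENNReal.ofReal (Δ ω) ∂μ ≤
      (1 - ENNReal.ofReal r)⁻¹ * ∫⁻ ω, ENNReal.ofReal (G ω) ∂μ := by
  have hG : Measurable fun ω => ENNReal.ofReal (G ω) :=
    ENNReal.measurable_ofReal.comp (hGm.mono hm).measurable
  have hs : ∀ j : ℕ, MeasurableSet {ω | (j : ℝ) < Δ ω} := fun j =>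
    measurableSet_lt measurable_const hΔ
  calc ∫⁻ ω, ENNReal.ofReal (G ω) * ENNReal.ofReal (Δ ω) ∂μ
      ≤ ∫⁻ ω, ∑' j : ℕ, {ω | (j : ℝ) < Δ ω}.indicator (fun ω => ENNReal.ofReal (G ω)) ω ∂μ := by
        refine lintegral_mono fun ω => ?_
        simpa only [Set.indicator_apply, Set.mem_ofPred_eq, mul_ite, mul_one, mul_zero,
          ← ENNReal.tsum_mul_left] using mul_le_mul_of_nonneg_left
            (ENNReal.ofReal_le_tsum_ite_natCast_lt (Δ ω)) (zero_le (a := ENNReal.ofReal (G ω)))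
    _ = ∑' j : ℕ, ∫⁻ ω in {ω | (j : ℝ) < Δ ω}, ENNReal.ofReal (G ω) ∂μ := by
        rw [lintegral_tsum fun j => (hG.indicator (hs j)).aemeasurable]
        exact tsum_congr fun j => lintegral_indicator (hs j) _
    _ ≤ ∑' j : ℕ, ENNReal.ofReal r ^ j * ∫⁻ ω, ENNReal.ofReal (G ω) ∂μ := by
        refine ENNReal.tsum_le_tsum fun j => ?_
        rw [← ENNReal.ofReal_pow hr]
        exact setLIntegral_ofReal_le_of_condExp_indicator_le hm hGm hGint hG0 (hs j) (htail j)
    _ = _ := by rw [ENNReal.tsum_mul_right, ENNReal.tsum_geometric]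

theorem integrable_of_nonneg_of_le {f : Ω → ℝ} (hf : Measurable f) {C : ℝ}
    (hf0 : ∀ ω, 0 ≤ f ω) (hfC : ∀ ω, f ω ≤ C) : Integrable f μ :=
  .of_bound hf.aestronglyMeasurable C
    (ae_of_all _ fun ω => (Real.norm_of_nonneg (hf0 ω)).trans_le (hfC ω))

variable {ℱ : Filtration ℕ m0} {c : ℕ → Ω → ℝ} {B : ℝ}

theorem lintegral_tsum_ofReal_mul_le_of_tail_le {G Δ : ℕ → Ω → ℝ} {r : ℝ} (hr : 0 ≤ r)
    {K : ℝ≥0∞} (hGm : ∀ k, Measurable[ℱ k] (G k)) (hGint : ∀ k, Integrable (G k) μ)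
    (hG0 : ∀ k ω, 0 ≤ G k ω) (hGK : ∀ ω, ∑' k, ENNReal.ofReal (G k ω) ≤ K)
    (hΔ : ∀ k, Measurable (Δ k))
    (htail : ∀ k (j : ℕ), ∀ᵐ ω ∂μ,
      μ[{ω | (j : ℝ) < Δ k ω}.indicator (fun _ => (1 : ℝ))|ℱ k] ω ≤ r ^ j) :
    ∫⁻ ω, ∑' k, ENNReal.ofReal (G k ω) * ENNReal.ofReal (Δ k ω) ∂μ ≤
      (1 - ENNReal.ofReal r)⁻¹ * (K * μ Set.univ) := by
  have hGofReal : ∀ k, Measurable fun ω => ENNReal.ofReal (G k ω) := fun k =>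
    ENNReal.measurable_ofReal.comp ((hGm k).mono (ℱ.le k) le_rfl)
  calc ∫⁻ ω, ∑' k, ENNReal.ofReal (G k ω) * ENNReal.ofReal (Δ k ω) ∂μ
      = ∑' k, ∫⁻ ω, ENNReal.ofReal (G k ω) * ENNReal.ofReal (Δ k ω) ∂μ :=
        lintegral_tsum fun k =>
          ((hGofReal k).mul (ENNReal.measurable_ofReal.comp (hΔ k))).aemeasurable
    _ ≤ ∑' k, (1 - ENNReal.ofReal r)⁻¹ * ∫⁻ ω, ENNReal.ofReal (G k ω) ∂μ :=
        ENNReal.tsum_le_tsum fun k => lintegral_ofReal_mul_le_of_tail_le (ℱ.le k)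
          (hGm k).stronglyMeasurable (hGint k) (hG0 k) (hΔ k) hr (htail k)
    _ = (1 - ENNReal.ofReal r)⁻¹ * ∫⁻ ω, ∑' k, ENNReal.ofReal (G k ω) ∂μ := by
        rw [ENNReal.tsum_mul_left, lintegral_tsum fun k => (hGofReal k).aemeasurable]
    _ ≤ (1 - ENNReal.ofReal r)⁻¹ * (K * μ Set.univ) := by
        gcongr
        exact (lintegral_mono hGK).trans_eq (lintegral_const K)

theorem ae_tsum_ofReal_mul_ne_top_of_tsum_le {Δ : ℕ → Ω → ℝ} {r M : ℝ}
    (hr : 0 ≤ r) (hr1 : r < 1) (hM : 0 ≤ M)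
    (hc : ∀ k, Measurable[ℱ k] (c k)) (hc0 : ∀ k ω, 0 ≤ c k ω) (hcB : ∀ k ω, c k ω ≤ B)
    (hΔ : ∀ k, Measurable (Δ k))
    (htail : ∀ k (j : ℕ), ∀ᵐ ω ∂μ,
      μ[{ω | (j : ℝ) < Δ k ω}.indicator (fun _ => (1 : ℝ))|ℱ k] ω ≤ r ^ j) :
    ∀ᵐ ω ∂μ, ∑' k, ENNReal.ofReal (c k ω) ≤ ENNReal.ofReal M →
      ∑' k, ENNReal.ofReal (c k ω) * ENNReal.ofReal (Δ k ω) ≠ ∞ := by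
  -- `G` is `c` stopped once its partial sums exceed `M`, so that `∑ G ≤ M + B` everywhere.
  set G : ℕ → Ω → ℝ := fun k ω => if ∑ j ∈ Finset.range k, c j ω ≤ M then c k ω else 0
  have hGm : ∀ k, Measurable[ℱ k] (G k) := fun k =>
    Measurable.ite (measurableSet_le (Finset.measurable_sum _ fun j hj =>
      (hc j).mono (ℱ.mono (Finset.mem_range.1 hj).le) le_rfl) measurable_const)
      (hc k) measurable_const
  have hG0 : ∀ k ω, 0 ≤ G k ω := fun k ω => by
    simp only [G]; split_ifs <;> simp [hc0 k ω]
  have hGint : ∀ k, Integrable (G k) μ := fun k =>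
    integrable_of_nonneg_of_le ((hGm k).mono (ℱ.le k) le_rfl) (hG0 k) fun ω => by
      simp only [G]; split_ifs
      · exact hcB k ω
      · exact (hc0 0 ω).trans (hcB 0 ω)
  have hGK : ∀ ω, ∑' k, ENNReal.ofReal (G k ω) ≤ ENNReal.ofReal (M + B) := fun ω =>
    ENNReal.tsum_le_of_sum_range_le fun n => by
      rw [← ENNReal.ofReal_sum_of_nonneg fun k _ => hG0 k ω]
      exact ENNReal.ofReal_le_ofReal
        (sum_range_ite_sum_le_add hM (fun k => hc0 k ω) (fun k => hcB k ω) n)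
  have hfin : (1 - ENNReal.ofReal r)⁻¹ * (ENNReal.ofReal (M + B) * μ Set.univ) ≠ ∞ :=
    ENNReal.mul_ne_top (ENNReal.inv_ne_top.2 (tsub_pos_of_lt (ENNReal.ofReal_lt_one.2 hr1)).ne')
      (ENNReal.mul_ne_top ENNReal.ofReal_ne_top (measure_ne_top μ Set.univ))
  have hmeas : Measurable fun ω => ∑' k, ENNReal.ofReal (G k ω) * ENNReal.ofReal (Δ k ω) :=
    Measurable.tsum fun k => (ENNReal.measurable_ofReal.comp ((hGm k).mono (ℱ.le k) le_rfl)).mul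
      (ENNReal.measurable_ofReal.comp (hΔ k))
  filter_upwards [ae_lt_top' hmeas.aemeasurable (ne_top_of_le_ne_top hfin
    (lintegral_tsum_ofReal_mul_le_of_tail_le hr hGm hGint hG0 hGK hΔ htail))] with ω hω hcM
  have hGc : ∀ k, G k ω = c k ω := fun k => if_pos <| by
    rw [← ENNReal.ofReal_le_ofReal_iff hM, ENNReal.ofReal_sum_of_nonneg fun j _ => hc0 j ω]
    exact (ENNReal.sum_le_tsum _).trans hcM
  simpa only [hGc] using hω.ne

theorem ae_tsum_ofReal_mul_ne_top_of_tail_le {Δ : ℕ → Ω → ℝ} {r : ℝ} (hr : 0 ≤ r) (hr1 : r < 1)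
    (hc : ∀ k, Measurable[ℱ k] (c k)) (hc0 : ∀ k ω, 0 ≤ c k ω) (hcB : ∀ k ω, c k ω ≤ B)
    (hΔ : ∀ k, Measurable (Δ k))
    (htail : ∀ k (j : ℕ), ∀ᵐ ω ∂μ,
      μ[{ω | (j : ℝ) < Δ k ω}.indicator (fun _ => (1 : ℝ))|ℱ k] ω ≤ r ^ j) :
    ∀ᵐ ω ∂μ, ∑' k, ENNReal.ofReal (c k ω) ≠ ∞ →
      ∑' k, ENNReal.ofReal (c k ω) * ENNReal.ofReal (Δ k ω) ≠ ∞ := by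
  filter_upwards [ae_all_iff.2 fun M : ℕ => ae_tsum_ofReal_mul_ne_top_of_tsum_le hr hr1
    M.cast_nonneg hc hc0 hcB hΔ htail] with ω hω hfin
  obtain ⟨M, hM⟩ := ENNReal.exists_nat_gt hfin
  exact hω M (by simpa using hM.le)

theorem ae_tsum_ofReal_mul_eq_top_of_condExp_ge {D : ℕ → Ω → ℝ} {δ : ℝ} (hδ : 0 < δ)
    (hc : ∀ k, Measurable[ℱ k] (c k)) (hc0 : ∀ k ω, 0 ≤ c k ω) (hcB : ∀ k ω, c k ω ≤ B)
    (hD : ∀ k, Measurable[ℱ (k + 1)] (D k)) (hD0 : ∀ k ω, 0 ≤ D k ω) (hD1 : ∀ k ω, D k ω ≤ 1)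
    (hcond : ∀ k, ∀ᵐ ω ∂μ, δ ≤ μ[D k|ℱ k] ω) :
    ∀ᵐ ω ∂μ, ∑' k, ENNReal.ofReal (c k ω) = ∞ → ∑' k, ENNReal.ofReal (c k ω * D k ω) = ∞ := by
  set g : ℕ → Ω → ℝ := fun n ω => ∑ k ∈ Finset.range n, c k ω * D k ω
  have hcD : ∀ k, Measurable[ℱ (k + 1)] fun ω => c k ω * D k ω := fun k =>
    ((hc k).mono (ℱ.mono k.le_succ) le_rfl).mul (hD k)
  have hcD0 : ∀ k ω, 0 ≤ c k ω * D k ω := fun k ω => mul_nonneg (hc0 k ω) (hD0 k ω)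
  have hcDB : ∀ k ω, c k ω * D k ω ≤ B := fun k ω =>
    mul_le_of_le_one_right (hc0 k ω) (hD1 k ω) |>.trans (hcB k ω)
  have hcDint : ∀ k, Integrable (fun ω => c k ω * D k ω) μ := fun k =>
    integrable_of_nonneg_of_le ((hcD k).mono (ℱ.le _) le_rfl) (hcD0 k) (hcDB k)
  have hincr : ∀ n, g (n + 1) - g n = fun ω => c n ω * D n ω := fun n => by
    ext ω; exact Finset.sum_range_succ_sub_sum _
  have hpull : ∀ n, μ[g (n + 1) - g n|ℱ n] =ᵐ[μ] fun ω => c n ω * μ[D n|ℱ n] ω := fun n =>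
    hincr n ▸ condExp_mul_of_stronglyMeasurable_left (hc n).stronglyMeasurable (hcDint n)
      (integrable_of_nonneg_of_le ((hD n).mono (ℱ.le _) le_rfl) (hD0 n) (hD1 n))
  have hlevy := tendsto_sum_indicator_atTop_iff (μ := μ) (R := B.toNNReal)
    (ae_of_all _ fun ω n => by
      simp only [Finset.sum_range_succ]; exact le_add_of_nonneg_right (hcD0 n ω))
    (fun n => (Finset.measurable_sum _ fun k hk =>
      (hcD k).mono (ℱ.mono (Finset.mem_range.1 hk)) le_rfl).stronglyMeasurable)
    (fun n => integrable_finsetSum _ fun k _ => hcDint k)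
    (ae_of_all _ fun ω n => by
      rw [Finset.sum_range_succ_sub_sum, abs_of_nonneg (hcD0 n ω)]
      exact (hcDB n ω).trans (Real.le_coe_toNNReal B))
  filter_upwards [hlevy, ae_all_iff.2 hpull, ae_all_iff.2 hcond] with ω hlevy hpull hcond htop
  rw [ENNReal.tsum_ofReal_eq_top_iff_tendsto (hc0 · ω)] at htop
  rw [ENNReal.tsum_ofReal_eq_top_iff_tendsto (hcD0 · ω)]
  refine hlevy.2 (tendsto_atTop_mono (fun n => ?_) (htop.const_mul_atTop hδ))
  rw [predictablePart, Finset.sum_apply, Finset.mul_sum]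
  exact Finset.sum_le_sum fun k _ => (hpull k).symm ▸ by
    rw [mul_comm]; exact mul_le_mul_of_nonneg_left (hcond k) (hc0 k ω)

theorem ae_tsum_ofReal_mul_eq_top_iff_of_condExp_exp {Δ q : ℕ → Ω → ℝ} {α₁ α₂ : ℝ}
    (hα₁ : 0 < α₁) (hq : ∀ k ω, α₁ ≤ q k ω ∧ q k ω ≤ α₂)
    (hc : ∀ k, Measurable[ℱ k] (c k)) (hc0 : ∀ k ω, 0 ≤ c k ω) (hcB : ∀ k ω, c k ω ≤ B)
    (hΔ : ∀ k, Measurable[ℱ (k + 1)] (Δ k))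
    (hexp : ∀ k (s : ℝ), 0 ≤ s → μ[{ω | s < Δ k ω}.indicator (fun _ => (1 : ℝ))|ℱ k] =ᵐ[μ]
      fun ω => Real.exp (-q k ω * s)) :
    ∀ᵐ ω ∂μ, ∑' k, ENNReal.ofReal (c k ω) * ENNReal.ofReal (Δ k ω) = ∞ ↔
      ∑' k, ENNReal.ofReal (c k ω) = ∞ := by
  have hlower : ∀ k, ∀ᵐ ω ∂μ,
      Real.exp (-α₂) ≤ μ[{ω | 1 < Δ k ω}.indicator (fun _ => (1 : ℝ))|ℱ k] ω := fun k => by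
    filter_upwards [hexp k 1 zero_le_one] with ω hω
    simpa [hω] using (hq k ω).2
  have hupper : ∀ k (j : ℕ), ∀ᵐ ω ∂μ,
      μ[{ω | (j : ℝ) < Δ k ω}.indicator (fun _ => (1 : ℝ))|ℱ k] ω ≤ Real.exp (-α₁) ^ j :=
    fun k j => by
      filter_upwards [hexp k j j.cast_nonneg] with ω hω
      rw [hω, ← Real.exp_nat_mul, mul_comm (j : ℝ)]
      exact Real.exp_le_exp.2 (mul_le_mul_of_nonneg_right (neg_le_neg (hq k ω).1) j.cast_nonneg)
  filter_upwards [ae_tsum_ofReal_mul_eq_top_of_condExp_ge (Real.exp_pos _) hc hc0 hcB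
      (fun k => measurable_const.indicator (measurableSet_lt measurable_const (hΔ k)))
      (fun k => Set.indicator_nonneg (fun _ _ => zero_le_one))
      (fun k => Set.indicator_le_self' fun _ _ => zero_le_one) hlower,
    ae_tsum_ofReal_mul_ne_top_of_tail_le (Real.exp_pos _).le
      (Real.exp_lt_one_iff.2 (neg_lt_zero.2 hα₁)) hc hc0 hcB
      (fun k => (hΔ k).mono (ℱ.le _) le_rfl) hupper] with ω hdiv hconv
  refine ⟨fun h => not_not.1 fun hne => hconv hne h, fun h => top_le_iff.1 ?_⟩
  refine (hdiv h).symm.le.trans (ENNReal.tsum_le_tsum fun k => ?_)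
  by_cases h1 : 1 < Δ k ω
  · simpa [h1] using le_mul_of_one_le_right' (ENNReal.one_le_ofReal.2 h1.le)
  · simp [h1]

theorem ae_setOf_mem_infinite_iff_tsum_eq_top {s : ℕ → Set Ω}
    (hs : ∀ n, MeasurableSet[ℱ n] (s n)) {p : ℕ → Ω → ℝ} (hp0 : ∀ k ω, 0 ≤ p k ω)
    (hp : ∀ k, μ[(s (k + 1)).indicator (fun _ => (1 : ℝ))|ℱ k] =ᵐ[μ] p k) :
    ∀ᵐ ω ∂μ, {k | ω ∈ s k}.Infinite ↔ ∑' k, ENNReal.ofReal (p k ω) = ∞ := by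
  filter_upwards [ae_mem_limsup_atTop_iff μ hs, ae_all_iff.2 hp] with ω hlim hp
  rw [ENNReal.tsum_ofReal_eq_top_iff_tendsto (hp0 · ω), ← Nat.frequently_atTop_iff_infinite,
    ← mem_limsup_iff_frequently_mem, hlim]
  exact tendsto_congr fun n => Finset.sum_congr rfl fun k _ => hp k

end

section JumpRates

variable {N : Type*} (Q : N → N → ℝ)

noncomputable def jumpRate (x : N) : ℝ :=
  ∑' y, if y ≠ x then Q x y else 0

noncomputable def jumpRateInto (L : Set N) (x : N) : ℝ :=
  ∑' y, if y ∈ L ∧ y ≠ x then Q x y else 0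

variable {Q}

theorem jumpRateInto_nonneg (hQ : ∀ x y, 0 ≤ Q x y) (L : Set N) (x : N) :
    0 ≤ jumpRateInto Q L x :=
  tsum_nonneg fun y => by split_ifs <;> simp [hQ x y]

theorem jumpRateInto_le_jumpRate (hQ : ∀ x y, 0 ≤ Q x y) (L : Set N) {x : N}
    (hx : 0 < jumpRate Q x) : jumpRateInto Q L x ≤ jumpRate Q x := by
  have hsum : Summable fun y => if y ≠ x then Q x y else 0 :=
    by_contra fun h => hx.ne' (tsum_eq_zero_of_not_summable h)
  have hle : ∀ y, (if y ∈ L ∧ y ≠ x then Q x y else 0) ≤ if y ≠ x then Q x y else 0 :=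
    fun y => by split_ifs <;> simp_all
  exact (hsum.of_nonneg_of_le (fun y => by split_ifs <;> simp [hQ x y]) hle).tsum_le_tsum hle hsum

end JumpRates

theorem integral_infinite_iff_io_general
    {N : Type*} {Ω : Type*} {m0 : MeasurableSpace Ω}
    (μ : Measure Ω) [IsProbabilityMeasure μ]
    (Q : N → N → ℝ) (hQ : ∀ x y, 0 ≤ Q x y)
    (α₁ α₂ : ℝ) (hα₁ : 0 < α₁)
    (hrate : ∀ x : N, α₁ ≤ (∑' y, if y ≠ x then Q x y else 0) ∧
      (∑' y, if y ≠ x then Q x y else 0) ≤ α₂)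
    (L : Set N)
    (E : ℝ → Ω → N)          -- the continuous-time process
    (Ek : ℕ → Ω → N)         -- the embedded discrete chain
    (τ : ℕ → Ω → ℝ)          -- the jump times
    (hτ0 : ∀ ω, τ 0 ω = 0)
    (hτmono : ∀ ω, StrictMono (fun k => τ k ω))
    (hnonexpl : ∀ ω, Filter.Tendsto (fun k => τ k ω) Filter.atTop Filter.atTop)
    (hembed : ∀ ω k t, τ k ω ≤ t → t < τ (k + 1) ω → E t ω = Ek k ω)
    (ℱ : Filtration ℕ m0)
    (hadp : ∀ k, @Measurable Ω N (ℱ k) ⊤ (Ek k) ∧ @Measurable Ω ℝ (ℱ k) _ (τ k))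
    -- jump-chain transition probabilities Q(x,y)/Q(x)
    (hjump : ∀ (k : ℕ) (L' : Set N),
      μ[Set.indicator {ω | Ek (k + 1) ω ∈ L'} (fun _ => (1 : ℝ)) | ℱ k] =ᵐ[μ]
        fun ω => (∑' y, if y ∈ L' ∧ y ≠ Ek k ω then Q (Ek k ω) y else 0) /
          (∑' y, if y ≠ Ek k ω then Q (Ek k ω) y else 0))
    -- conditionally exponential holding times with rate Q(Eₖ)
    (hhold : ∀ (k : ℕ) (s : ℝ), 0 ≤ s →
      μ[Set.indicator {ω | s < τ (k + 1) ω - τ k ω} (fun _ => (1 : ℝ)) | ℱ k] =ᵐ[μ]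
        fun ω => Real.exp (-(∑' y, if y ≠ Ek k ω then Q (Ek k ω) y else 0) * s)) :
    ∀ᵐ ω ∂μ,
      ((∫⁻ t in Set.Ici (0 : ℝ),
          ENNReal.ofReal (∑' y, if y ∈ L ∧ y ≠ E t ω then Q (E t ω) y else 0) = ⊤) ↔
        {k : ℕ | Ek k ω ∈ L}.Infinite) := by
  simp only [← jumpRateInto.eq_1, ← jumpRate.eq_1] at hrate hjump hhold ⊢
  have hq : ∀ x, 0 < jumpRate Q x := fun x => hα₁.trans_le (hrate x).1
  have hqL : ∀ x, jumpRateInto Q L x ≤ α₂ := fun x =>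
    (jumpRateInto_le_jumpRate hQ L (hq x)).trans (hrate x).2
  filter_upwards [ae_tsum_ofReal_mul_eq_top_iff_of_condExp_exp
      (c := fun k ω => jumpRateInto Q L (Ek k ω)) (Δ := fun k ω => τ (k + 1) ω - τ k ω)
      hα₁ (fun k ω => hrate _)
      (fun k => (measurable_from_top (f := jumpRateInto Q L)).comp (hadp k).1)
      (fun k ω => jumpRateInto_nonneg hQ L _) (fun k ω => hqL _)
      (fun k => (hadp (k + 1)).2.sub ((hadp k).2.mono (ℱ.mono k.le_succ) le_rfl)) hhold,
    ae_setOf_mem_infinite_iff_tsum_eq_top (s := fun k => {ω | Ek k ω ∈ L})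
      (fun k => (hadp k).1 MeasurableSpace.measurableSet_top)
      (fun k ω => div_nonneg (jumpRateInto_nonneg hQ L _) (hq _).le) (fun k => hjump k L)]
    with ω hholding hvisits
  have hpath := lintegral_Ici_eq_tsum_of_eq_on_Ico (hτmono ω).monotone (hnonexpl ω)
    (f := fun t => ENNReal.ofReal (jumpRateInto Q L (E t ω)))
    fun k t h₁ h₂ => by rw [hembed ω k t h₁ h₂]
  rw [hτ0] at hpath
  rw [hpath, hholding, hvisits, tsum_ofReal_div_eq_top_iff hα₁
    (fun k => jumpRateInto_nonneg hQ L _) (fun k => hrate _)]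

/-- Lemma 3.6 (after Schwartz): for a nonexplosive continuous-time jump process with total
jump rates bounded between `α₁ > 0` and `α₂ < ∞`, embedded chain `Eₖ` and jump times `τₖ`,
and any set `L`, almost surely `∫₀^∞ Q_L(E_t) dt = ∞` iff `Eₖ ∈ L` infinitely often. -/
theorem integral_infinite_iff_io
    {N : Type*} [Countable N] {Ω : Type*} {m0 : MeasurableSpace Ω}
    (μ : Measure Ω) [IsProbabilityMeasure μ]
    (Q : N → N → ℝ) (hQ : ∀ x y, 0 ≤ Q x y)
    (α₁ α₂ : ℝ) (hα₁ : 0 < α₁) (hα₁₂ : α₁ < α₂)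
    (hrate : ∀ x : N, α₁ ≤ (∑' y, if y ≠ x then Q x y else 0) ∧
      (∑' y, if y ≠ x then Q x y else 0) ≤ α₂)
    (L : Set N)
    (E : ℝ → Ω → N)          -- the continuous-time process
    (Ek : ℕ → Ω → N)         -- the embedded discrete chain
    (τ : ℕ → Ω → ℝ)          -- the jump times
    (hτ0 : ∀ ω, τ 0 ω = 0)
    (hτmono : ∀ ω, StrictMono (fun k => τ k ω))
    (hnonexpl : ∀ ω, Filter.Tendsto (fun k => τ k ω) Filter.atTop Filter.atTop)
    (hembed : ∀ ω k t, τ k ω ≤ t → t < τ (k + 1) ω → E t ω = Ek k ω)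
    (ℱ : Filtration ℕ m0)
    (hadp : ∀ k, @Measurable Ω N (ℱ k) ⊤ (Ek k) ∧ @Measurable Ω ℝ (ℱ k) _ (τ k))
    -- jump-chain transition probabilities Q(x,y)/Q(x)
    (hjump : ∀ (k : ℕ) (L' : Set N),
      μ[Set.indicator {ω | Ek (k + 1) ω ∈ L'} (fun _ => (1 : ℝ)) | ℱ k] =ᵐ[μ]
        fun ω => (∑' y, if y ∈ L' ∧ y ≠ Ek k ω then Q (Ek k ω) y else 0) /
          (∑' y, if y ≠ Ek k ω then Q (Ek k ω) y else 0))
    -- conditionally exponential holding times with rate Q(Eₖ)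
    (hhold : ∀ (k : ℕ) (s : ℝ), 0 ≤ s →
      μ[Set.indicator {ω | s < τ (k + 1) ω - τ k ω} (fun _ => (1 : ℝ)) | ℱ k] =ᵐ[μ]
        fun ω => Real.exp (-(∑' y, if y ≠ Ek k ω then Q (Ek k ω) y else 0) * s)) :
    ∀ᵐ ω ∂μ,
      ((∫⁻ t in Set.Ici (0 : ℝ),
          ENNReal.ofReal (∑' y, if y ∈ L ∧ y ≠ E t ω then Q (E t ω) y else 0) = ⊤) ↔
        {k : ℕ | Ek k ω ∈ L}.Infinite) :=
  integral_infinite_iff_io_general μ Q hQ α₁ α₂ hα₁ hrate L E Ek τ hτ0 hτmono hnonexpl hembed ℱ hadp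
    hjump hhold
end

section
/- Let $(X_i(t))_{i=1}^n$ be independent copies of a Markov chain with transition function $p_t$, started at $x_1,\dots,x_n$, and let $\mu$ be a probability measure on $\{0,1\}^{\mathcal{S}}$. Suppose that for every $x$, the random variables $Z_t^x(\eta) = \sum_y p_t(x,y)\eta(y)$ converge in probability (under $\mu$) to the constant $\alpha(x) \in [0,1]$. Then $\lim_{t\to\infty} E^{(x_1,\dots,x_n)} \hat\mu(\{X_1(t),\dots,X_n(t)\}) = \prod_{i=1}^n \alpha(x_i)$, where $\hat\mu(A) = \mu\{\eta : \eta \equiv 1 \text{ on } A\}$. -/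
/-!
Since every `Z_t^x` takes values in `[0, 1]`, convergence in probability to `α x` upgrades to
convergence in `L¹`. A product of numbers in `[0, 1]` is `1`-Lipschitz in each factor, so
`|∏ᵢ Z_t^{xᵢ} - ∏ᵢ α(xᵢ)| ≤ ∑ᵢ |Z_t^{xᵢ} - α(xᵢ)|`, and integrating this bound against `μ` gives
the claim.
-/

open MeasureTheory Filter Topology

theorem Finset.norm_prod_sub_prod_le_sum_norm_sub {ι R : Type*} [NormedCommRing R]
    [NormOneClass R] (s : Finset ι) {f g : ι → R} (hf : ∀ i ∈ s, ‖f i‖ ≤ 1)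
    (hg : ∀ i ∈ s, ‖g i‖ ≤ 1) :
    ‖∏ i ∈ s, f i - ∏ i ∈ s, g i‖ ≤ ∑ i ∈ s, ‖f i - g i‖ := by
  induction s using Finset.cons_induction with
  | empty => simp
  | cons a s ha ih =>
    obtain ⟨hfa, hf⟩ := (Finset.forall_mem_cons ha _).1 hf
    obtain ⟨-, hg⟩ := (Finset.forall_mem_cons ha _).1 hg
    have hgs : ‖∏ i ∈ s, g i‖ ≤ 1 :=
      (Finset.norm_prod_le s g).trans (Finset.prod_le_one (fun _ _ => norm_nonneg _) hg)
    rw [Finset.prod_cons, Finset.prod_cons, Finset.sum_cons]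
    calc ‖f a * ∏ i ∈ s, f i - g a * ∏ i ∈ s, g i‖
        = ‖f a * (∏ i ∈ s, f i - ∏ i ∈ s, g i) + (f a - g a) * ∏ i ∈ s, g i‖ := by
          congr 1; ring
      _ ≤ ‖f a‖ * ‖∏ i ∈ s, f i - ∏ i ∈ s, g i‖ + ‖f a - g a‖ * ‖∏ i ∈ s, g i‖ :=
          (norm_add_le _ _).trans (add_le_add (norm_mul_le _ _) (norm_mul_le _ _))
      _ ≤ 1 * ∑ i ∈ s, ‖f i - g i‖ + ‖f a - g a‖ * 1 := by
          gcongr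
          exact ih hf hg
      _ = ‖f a - g a‖ + ∑ i ∈ s, ‖f i - g i‖ := by ring

namespace MeasureTheory

variable {α E : Type*} [MeasurableSpace α] {μ : Measure α} [NormedAddCommGroup E]

theorem integral_norm_le_mul_measureReal_add [IsFiniteMeasure μ] {F : α → E}
    (hF : AEStronglyMeasurable F μ) {C : ℝ} (hC : ∀ᵐ x ∂μ, ‖F x‖ ≤ C) {ε : ℝ} (hε : 0 ≤ ε) :
    ∫ x, ‖F x‖ ∂μ ≤ ε * μ.real Set.univ + C * μ.real {x | ε ≤ ‖F x‖} := by
  set T := toMeasurable μ {x | ε ≤ ‖F x‖}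
  have hT : MeasurableSet T := measurableSet_toMeasurable _ _
  have hμT : μ.real T = μ.real {x | ε ≤ ‖F x‖} := by
    simp only [T, measureReal_def, measure_toMeasurable]
  have hbound : ∀ᵐ x ∂μ, ‖F x‖ ≤ ε + T.indicator (fun _ => C) x := by
    filter_upwards [hC] with x hx
    by_cases hxT : x ∈ T
    · rw [Set.indicator_of_mem hxT]
      linarith
    · rw [Set.indicator_of_notMem hxT, add_zero]
      exact le_of_lt (not_le.1 fun h => hxT (subset_toMeasurable _ _ h))
  calc ∫ x, ‖F x‖ ∂μ ≤ ∫ x, (ε + T.indicator (fun _ => C) x) ∂μ :=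
        integral_mono_ae (Integrable.of_bound hF.norm C (by simpa using hC))
          ((integrable_const ε).add ((integrable_const C).indicator hT)) hbound
    _ = ε * μ.real Set.univ + C * μ.real {x | ε ≤ ‖F x‖} := by
        rw [integral_add (integrable_const _) ((integrable_const C).indicator hT), integral_const,
          integral_indicator_const _ hT, hμT, smul_eq_mul, smul_eq_mul, mul_comm C, mul_comm ε]

theorem TendstoInMeasure.tendsto_integral_norm_sub [IsFiniteMeasure μ] {ι : Type*}
    {l : Filter ι} {f : ι → α → E} {g : α → E} (hfg : TendstoInMeasure μ f l g)
    (hf : ∀ i, AEStronglyMeasurable (f i) μ) (hg : AEStronglyMeasurable g μ) {C : ℝ}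
    (hC : ∀ i, ∀ᵐ x ∂μ, ‖f i x - g x‖ ≤ C) :
    Tendsto (fun i => ∫ x, ‖f i x - g x‖ ∂μ) l (𝓝 0) := by
  rw [Metric.tendsto_nhds]
  intro δ hδ
  obtain ⟨ε, hε, hεδ⟩ := exists_pos_mul_lt (half_pos hδ) (μ.real Set.univ)
  have hbad : Tendsto (fun i => C * μ.real {x | ε ≤ ‖f i x - g x‖}) l (𝓝 0) := by
    simpa using ((tendstoInMeasure_iff_measureReal_norm.1 hfg) ε hε).const_mul C
  filter_upwards [hbad.eventually (gt_mem_nhds (half_pos hδ))] with i hi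
  have hle := integral_norm_le_mul_measureReal_add ((hf i).sub hg) (hC i) hε.le
  rw [Real.dist_eq, sub_zero, abs_of_nonneg (integral_nonneg fun _ => norm_nonneg _)]
  simp only [Pi.sub_apply] at hle
  linarith

variable {ι R : Type*} [Fintype ι] [NormedCommRing R] [NormOneClass R] [NormedSpace ℝ R]
  [CompleteSpace R] [IsProbabilityMeasure μ]

theorem dist_integral_prod_le_sum_integral_norm_sub {F : ι → α → R} {c : ι → R}
    (hmeas : ∀ i, AEStronglyMeasurable (F i) μ) (hF : ∀ i, ∀ᵐ x ∂μ, ‖F i x‖ ≤ 1)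
    (hc : ∀ i, ‖c i‖ ≤ 1) :
    dist (∫ x, ∏ i, F i x ∂μ) (∏ i, c i) ≤ ∑ i, ∫ x, ‖F i x - c i‖ ∂μ := by
  have hF' : ∀ᵐ x ∂μ, ∀ i, ‖F i x‖ ≤ 1 := ae_all_iff.2 hF
  have hint : ∀ i, Integrable (fun x => ‖F i x - c i‖) μ := fun i =>
    ((Integrable.of_bound (hmeas i) 1 (hF i)).sub (integrable_const _)).norm
  have hprod : Integrable (fun x => ∏ i, F i x) μ := by
    refine Integrable.of_bound ?_ 1 (hF'.mono fun x hx => ?_)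
    · exact Finset.aestronglyMeasurable_fun_prod Finset.univ fun i _ => hmeas i
    · exact (Finset.norm_prod_le _ _).trans
        (Finset.prod_le_one (fun _ _ => norm_nonneg _) fun i _ => hx i)
  calc dist (∫ x, ∏ i, F i x ∂μ) (∏ i, c i) = ‖∫ x, (∏ i, F i x - ∏ i, c i) ∂μ‖ := by
        rw [dist_eq_norm, integral_sub hprod (integrable_const _), integral_const, probReal_univ,
          one_smul]
    _ ≤ ∫ x, ‖∏ i, F i x - ∏ i, c i‖ ∂μ := norm_integral_le_integral_norm _
    _ ≤ ∫ x, ∑ i, ‖F i x - c i‖ ∂μ :=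
        integral_mono_ae (hprod.sub (integrable_const _)).norm
          (integrable_finsetSum _ fun i _ => hint i)
          (hF'.mono fun x hx => Finset.norm_prod_sub_prod_le_sum_norm_sub _
            (fun i _ => hx i) fun i _ => hc i)
    _ = ∑ i, ∫ x, ‖F i x - c i‖ ∂μ := integral_finsetSum _ fun i _ => hint i

theorem tendsto_integral_prod_of_tendstoInMeasure {κ : Type*} {l : Filter κ}
    {F : ι → κ → α → R} {c : ι → R} (hmeas : ∀ i t, AEStronglyMeasurable (F i t) μ)
    (hF : ∀ i t, ∀ᵐ x ∂μ, ‖F i t x‖ ≤ 1) (hc : ∀ i, ‖c i‖ ≤ 1)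
    (hconv : ∀ i, TendstoInMeasure μ (F i) l fun _ => c i) :
    Tendsto (fun t => ∫ x, ∏ i, F i t x ∂μ) l (𝓝 (∏ i, c i)) := by
  have hL1 : ∀ i, Tendsto (fun t => ∫ x, ‖F i t x - c i‖ ∂μ) l (𝓝 0) := fun i =>
    (hconv i).tendsto_integral_norm_sub (hmeas i) aestronglyMeasurable_const (C := 2)
      fun t => (hF i t).mono fun x hx =>
        (norm_sub_le _ _).trans (by linarith [hc i])
  refine tendsto_iff_dist_tendsto_zero.2 (squeeze_zero (fun _ => dist_nonneg)
    (fun t => dist_integral_prod_le_sum_integral_norm_sub (hmeas · t) (hF · t) hc) ?_)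
  simpa using tendsto_finsetSum Finset.univ fun i _ => hL1 i

end MeasureTheory

section Averages

variable {S : Type*} {w : S → ℝ}

theorem tsum_mul_ite_mem_Icc (hw : ∀ y, 0 ≤ w y) (hw1 : ∑' y, w y = 1) (η : S → Bool) :
    ∑' y, w y * (if η y then (1 : ℝ) else 0) ∈ Set.Icc (0 : ℝ) 1 := by
  have hsum : Summable w := not_not.1 fun h => by simp [tsum_eq_zero_of_not_summable h] at hw1
  have hle : ∀ y, w y * (if η y then (1 : ℝ) else 0) ≤ w y := fun y => by
    split_ifs <;> simp [hw y]
  have hnonneg : ∀ y, 0 ≤ w y * (if η y then (1 : ℝ) else 0) := fun y => by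
    split_ifs <;> simp [hw y]
  exact ⟨tsum_nonneg hnonneg,
    ((hsum.of_nonneg_of_le hnonneg hle).tsum_le_tsum hle hsum).trans hw1.le⟩

theorem continuous_tsum_mul_ite (hw : Summable w) :
    Continuous fun η : S → Bool => ∑' y, w y * (if η y then (1 : ℝ) else 0) := by
  refine continuous_tsum (fun y => ?_) hw.abs fun y η => ?_
  · exact continuous_const.mul
      ((continuous_of_discreteTopology (f := fun b : Bool => if b then (1 : ℝ) else 0)).comp
        (continuous_apply y))
  · split_ifs <;> simp

end Averages

theorem product_convergence_general
    {S : Type*} [Countable S]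
    (μ : Measure (S → Bool)) [IsProbabilityMeasure μ]
    (p : ℝ → S → S → ℝ)
    (hpnonneg : ∀ t x y, 0 ≤ p t x y)
    (hpprob : ∀ t x, ∑' y, p t x y = 1)
    (α : S → ℝ) (hα : ∀ x, α x ∈ Set.Icc (0 : ℝ) 1)
    -- Z t x η = ∑_y p_t(x,y) η(y)
    (Z : ℝ → S → (S → Bool) → ℝ)
    (hZ : ∀ t x η, Z t x η = ∑' y, p t x y * (if η y then (1 : ℝ) else 0))
    -- convergence in probability of Z t x to α x under μ
    (hprob : ∀ x, ∀ ε : ℝ, 0 < ε →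
      Filter.Tendsto (fun t => μ {η | ε ≤ |Z t x η - α x|}) Filter.atTop (nhds 0))
    (n : ℕ) (x : Fin n → S) :
    Filter.Tendsto (fun t => ∫ η, ∏ i : Fin n, Z t (x i) η ∂μ)
      Filter.atTop (nhds (∏ i : Fin n, α (x i))) := by
  have norm_le_one {a : ℝ} (ha : a ∈ Set.Icc (0 : ℝ) 1) : ‖a‖ ≤ 1 :=
    abs_le.2 ⟨by linarith [ha.1], ha.2⟩
  have hZ_eq : ∀ t x, Z t x = fun η => ∑' y, p t x y * (if η y then (1 : ℝ) else 0) :=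
    fun t x => funext (hZ t x)
  have hsum : ∀ t x, Summable (p t x) := fun t x =>
    not_not.1 fun h => by simpa [tsum_eq_zero_of_not_summable h] using hpprob t x
  refine tendsto_integral_prod_of_tendstoInMeasure (F := fun i t => Z t (x i))
    (fun i t => ?_) (fun i t => ae_of_all _ fun η => ?_) (fun i => norm_le_one (hα (x i)))
    (fun i => tendstoInMeasure_iff_dist.2 fun ε hε => ?_)
  · rw [hZ_eq]
    exact (continuous_tsum_mul_ite (hsum t (x i))).measurable.aestronglyMeasurable
  · rw [hZ_eq]
    exact norm_le_one (tsum_mul_ite_mem_Icc (hpnonneg t (x i)) (hpprob t (x i)) η)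
  · simpa only [Real.dist_eq] using hprob (x i) ε hε

/-- If for every `x` the averages `Z_t^x(η) = ∑_y p_t(x,y) η(y)` converge in probability
(under `μ`) to the constant `α(x)`, then the dual expectations factorize:
`E^{(x₁,…,xₙ)} μ̂({X₁(t),…,Xₙ(t)}) = ∫ ∏ᵢ Z_t^{xᵢ} dμ → ∏ᵢ α(xᵢ)`. -/
theorem product_convergence
    {S : Type*} [Countable S] [MeasurableSpace S]
    (μ : Measure (S → Bool)) [IsProbabilityMeasure μ]
    (p : ℝ → S → S → ℝ)
    (hpnonneg : ∀ t x y, 0 ≤ p t x y)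
    (hpprob : ∀ t x, ∑' y, p t x y = 1)
    (α : S → ℝ) (hα : ∀ x, α x ∈ Set.Icc (0 : ℝ) 1)
    -- Z t x η = ∑_y p_t(x,y) η(y)
    (Z : ℝ → S → (S → Bool) → ℝ)
    (hZ : ∀ t x η, Z t x η = ∑' y, p t x y * (if η y then (1 : ℝ) else 0))
    -- convergence in probability of Z t x to α x under μ
    (hprob : ∀ x, ∀ ε : ℝ, 0 < ε →
      Filter.Tendsto (fun t => μ {η | ε ≤ |Z t x η - α x|}) Filter.atTop (nhds 0))
    (n : ℕ) (x : Fin n → S) :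
    Filter.Tendsto (fun t => ∫ η, ∏ i : Fin n, Z t (x i) η ∂μ)
      Filter.atTop (nhds (∏ i : Fin n, α (x i))) :=
  product_convergence_general μ p hpnonneg hpprob α hα Z hZ hprob n x
end
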